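/- With F_Φ the two-point distribution concentrated at −1/x_Φ and x_Φ (with probabilities x_Φ²/(1+x_Φ²) and 1/(1+x_Φ²)), we have sup_{x∈ℝ} |F_Φ(x) − Φ(x)| = C_Φ; i.e., the bound sup_{F∈𝕍} Δ(F) ≤ C_Φ is attained. -/

import Mathlib

open Real MeasureTheory

noncomputable def stdNormalCDF (x : ℝ) : ℝ :=
  ∫ t in Set.Iic x, Real.exp (-t ^ 2 / 2) / Real.sqrt (2 * Real.pi)

noncomputable def twoPointMeasure (xΦ : ℝ) : Measure ℝ :=
  ENNReal.ofReal (xΦ ^ 2 / (1 + xΦ ^ 2)) • Measure.dirac (-1 / xΦ)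
    + ENNReal.ofReal (1 / (1 + xΦ ^ 2)) • Measure.dirac xΦ

/-!
Let `G t = 1 / (1 + t²) - Φ(-t)`, Cantelli's bound on `ℙ(X ≤ -t)` minus the normal tail; both
suprema equal `G x_Φ`. Indeed `G' t = 2 e^{-t²/2} (1/√(8π) - h t)` with
`h t = t e^{t²/2} / (1 + t²)²`; as `h 0 = 0`, `h` exceeds `1/√(8π)` for large `t` and `x_Φ` is the
only positive solution of `h t = 1/√(8π)`, `G` increases on `[0, x_Φ]` and decreases afterwards.
The CDF of `F_Φ` is `0`, `p = x_Φ² / (1 + x_Φ²)`, `1` on the three intervals cut out by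
`-1/x_Φ < x_Φ`; its distance to `Φ` is at most `G 0 = 1/2` on the outer two, at most
`max (G x_Φ) (G (1/x_Φ))` on the middle one, and tends to `Φ x_Φ - p = G x_Φ` as `x ↑ x_Φ`.
-/

open Set Filter Topology ProbabilityTheory

theorem IsPreconnected.lt_of_forall_ne {X α : Type*} [TopologicalSpace X] [LinearOrder α]
    [TopologicalSpace α] [OrderClosedTopology α] {s : Set X} (hs : IsPreconnected s)
    {f : X → α} (hf : ContinuousOn f s) {c : α} (hc : ∀ x ∈ s, f x ≠ c) {a b : X}
    (ha : a ∈ s) (hb : b ∈ s) (hfa : f a < c) : f b < c := by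
  by_contra! hfb
  obtain ⟨x, hx, hfx⟩ := hs.intermediate_value ha hb hf ⟨hfa.le, hfb⟩
  exact hc x hx hfx

theorem hasDerivAt_integral_Iic {E : Type*} [NormedAddCommGroup E] [NormedSpace ℝ E]
    [CompleteSpace E] {f : ℝ → E} (hf : Continuous f) (hint : Integrable f) (x : ℝ) :
    HasDerivAt (fun u ↦ ∫ t in Iic u, f t) (f x) x := by
  have hsplit : (fun u ↦ ∫ t in Iic u, f t) = fun u ↦ (∫ t in Iic 0, f t) + ∫ t in (0)..u, f t := by
    ext u
    rw [← intervalIntegral.integral_Iic_sub_Iic hint.integrableOn hint.integrableOn]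
    abel
  rw [hsplit]
  exact (hf.integral_hasStrictDerivAt 0 x).hasDerivAt.const_add _

theorem stdNormalCDF_eq_integral (x : ℝ) :
    stdNormalCDF x = ∫ t in Iic x, gaussianPDFReal 0 1 t := by
  simp [stdNormalCDF, gaussianPDFReal, div_eq_inv_mul]

theorem monotone_stdNormalCDF : Monotone stdNormalCDF := by
  intro a b hab
  simp only [stdNormalCDF_eq_integral]
  exact setIntegral_mono_set (integrable_gaussianPDFReal 0 1).integrableOn
    (.of_forall (gaussianPDFReal_nonneg 0 1)) (Iic_subset_Iic.mpr hab).eventuallyLE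

theorem stdNormalCDF_nonneg (x : ℝ) : 0 ≤ stdNormalCDF x := by
  rw [stdNormalCDF_eq_integral]
  exact setIntegral_nonneg measurableSet_Iic fun t _ ↦ gaussianPDFReal_nonneg 0 1 t

theorem stdNormalCDF_add_stdNormalCDF_neg (x : ℝ) : stdNormalCDF x + stdNormalCDF (-x) = 1 := by
  have hint := (integrable_gaussianPDFReal 0 1).integrableOn (s := Iic x)
  have hneg : stdNormalCDF (-x) = ∫ t in Ioi x, gaussianPDFReal 0 1 t := by
    rw [stdNormalCDF_eq_integral, ← integral_comp_neg_Ioi]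
    simp [gaussianPDFReal]
  rw [stdNormalCDF_eq_integral, hneg, intervalIntegral.integral_Iic_add_Ioi hint
    (integrable_gaussianPDFReal 0 1).integrableOn, integral_gaussianPDFReal_eq_one 0 one_ne_zero]

theorem stdNormalCDF_le_one (x : ℝ) : stdNormalCDF x ≤ 1 := by
  linarith [stdNormalCDF_add_stdNormalCDF_neg x, stdNormalCDF_nonneg (-x)]

theorem stdNormalCDF_zero : stdNormalCDF 0 = 1 / 2 := by
  have := stdNormalCDF_add_stdNormalCDF_neg 0
  rw [neg_zero] at this
  linarith

theorem hasDerivAt_stdNormalCDF (x : ℝ) : HasDerivAt stdNormalCDF (gaussianPDFReal 0 1 x) x := by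
  simp only [funext stdNormalCDF_eq_integral]
  exact hasDerivAt_integral_Iic (by unfold gaussianPDFReal; fun_prop)
    (integrable_gaussianPDFReal 0 1) x

theorem continuous_stdNormalCDF : Continuous stdNormalCDF :=
  continuous_iff_continuousAt.mpr fun x ↦ (hasDerivAt_stdNormalCDF x).continuousAt

noncomputable def criticalFun (y : ℝ) : ℝ := y * exp (y ^ 2 / 2) / (1 + y ^ 2) ^ 2

noncomputable def cantelliGap (t : ℝ) : ℝ := 1 / (1 + t ^ 2) - stdNormalCDF (-t)

theorem continuous_criticalFun : Continuous criticalFun := by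
  unfold criticalFun
  exact Continuous.div (by fun_prop) (by fun_prop) fun y ↦ by positivity

theorem criticalFun_zero : criticalFun 0 = 0 := by simp [criticalFun]

theorem one_div_sqrt_lt_criticalFun {u : ℝ} (hu : 4 ≤ u) :
    1 / √(8 * π) < criticalFun u := by
  have h5 : 5 < √(8 * π) := by
    rw [show (5 : ℝ) = √(5 ^ 2) by rw [sqrt_sq (by norm_num)]]
    exact sqrt_lt_sqrt (by norm_num) (by nlinarith [pi_gt_d6])
  refine (one_div_lt_one_div_of_lt (by norm_num) h5).trans_le ?_
  -- `exp (u² / 2) ≥ (1 + u² / 4)²`, and `5 u (1 + u² / 4)² ≥ (1 + u²)²` once `u ≥ 4`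
  have hexp : exp (u ^ 2 / 2) = exp (u ^ 2 / 4) * exp (u ^ 2 / 4) := by
    rw [← exp_add]; ring_nf
  have hb : 1 + u ^ 2 / 4 ≤ exp (u ^ 2 / 4) := by linarith [add_one_le_exp (u ^ 2 / 4)]
  rw [criticalFun, le_div_iff₀ (by positivity), hexp]
  nlinarith [mul_le_mul hb hb (by positivity) (exp_pos _).le, sq_nonneg u, sq_nonneg (u - 4)]

theorem hasDerivAt_cantelliGap (t : ℝ) :
    HasDerivAt cantelliGap (2 * exp (-t ^ 2 / 2) * (1 / √(8 * π) - criticalFun t)) t := by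
  have hsq : 0 < 1 + t ^ 2 := by positivity
  have hinv := (hasDerivAt_const t (1 : ℝ)).fun_div ((hasDerivAt_pow 2 t).const_add 1) hsq.ne'
  have htail : HasDerivAt (fun t ↦ stdNormalCDF (-t)) (gaussianPDFReal 0 1 (-t) * -1) t :=
    (hasDerivAt_stdNormalCDF (-t)).comp t (hasDerivAt_neg t)
  refine (hinv.fun_sub htail).congr_deriv ?_
  have h8 : √(8 * π) = 2 * √(2 * π) := by
    rw [show (8 : ℝ) * π = 2 ^ 2 * (2 * π) by ring, sqrt_mul (by positivity), sqrt_sq two_pos.le]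
  have hexp : exp (-(t ^ 2 / 2)) * exp (t ^ 2 / 2) = 1 := by
    rw [← exp_add, neg_add_cancel, exp_zero]
  simp only [gaussianPDFReal, criticalFun, h8, NNReal.coe_one, mul_one, sub_zero, neg_sq, neg_div]
  field_simp
  linear_combination (2 * t * √(2 * π)) * hexp

theorem cantelliGap_eq_sub (x : ℝ) : cantelliGap x = stdNormalCDF x - x ^ 2 / (1 + x ^ 2) := by
  rw [cantelliGap, eq_sub_of_add_eq' (stdNormalCDF_add_stdNormalCDF_neg x)]
  field_simp
  ring

theorem cantelliGap_zero : cantelliGap 0 = 1 / 2 := by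
  rw [cantelliGap_eq_sub, stdNormalCDF_zero]
  norm_num

theorem twoPointMeasure_Iic {xΦ : ℝ} (hpos : 0 < xΦ) (x : ℝ) :
    (twoPointMeasure xΦ (Iic x)).toReal =
      if xΦ ≤ x then 1 else if -1 / xΦ ≤ x then xΦ ^ 2 / (1 + xΦ ^ 2) else 0 := by
  have hp : 0 ≤ xΦ ^ 2 / (1 + xΦ ^ 2) := by positivity
  have hq : 0 ≤ 1 / (1 + xΦ ^ 2) := by positivity
  have hleft : -1 / xΦ < xΦ := (div_neg_of_neg_of_pos (by norm_num) hpos).trans hpos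
  simp only [twoPointMeasure, Measure.add_apply, Measure.smul_apply,
    Measure.dirac_apply' _ measurableSet_Iic, indicator_apply, mem_Iic, Pi.one_apply, smul_eq_mul]
  split_ifs with h₁ h₂ h₂ <;> try linarith
  · rw [mul_one, mul_one, ← ENNReal.ofReal_add hp hq, ENNReal.toReal_ofReal (by positivity)]
    field_simp
    ring
  · simp [hp]
  · simp

theorem tendsto_abs_twoPointMeasure_Iic_sub {xΦ : ℝ} (hpos : 0 < xΦ) :
    Tendsto (fun x ↦ |(twoPointMeasure xΦ (Iic x)).toReal - stdNormalCDF x|) (𝓝[<] xΦ)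
      (𝓝 |xΦ ^ 2 / (1 + xΦ ^ 2) - stdNormalCDF xΦ|) := by
  have hlim : Tendsto (fun x ↦ |xΦ ^ 2 / (1 + xΦ ^ 2) - stdNormalCDF x|) (𝓝[<] xΦ)
      (𝓝 |xΦ ^ 2 / (1 + xΦ ^ 2) - stdNormalCDF xΦ|) :=
    ((continuous_const.sub continuous_stdNormalCDF).abs.tendsto xΦ).mono_left nhdsWithin_le_nhds
  refine hlim.congr' ?_
  have hleft : -1 / xΦ < xΦ := (div_neg_of_neg_of_pos (by norm_num) hpos).trans hpos
  filter_upwards [Ioo_mem_nhdsLT hleft] with x hx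
  rw [twoPointMeasure_Iic hpos, if_neg (not_le.mpr hx.2), if_pos hx.1.le]

section UniqueRoot

variable {xΦ : ℝ}
  (huniq : ∀ y : ℝ, 0 < y → criticalFun y = 1 / √(8 * π) → y = xΦ)
include huniq

theorem criticalFun_lt_of_lt {t : ℝ} (ht₀ : 0 ≤ t) (ht : t < xΦ) :
    criticalFun t < 1 / √(8 * π) := by
  refine isPreconnected_Ico.lt_of_forall_ne continuous_criticalFun.continuousOn
    (fun y hy hroot ↦ ?_) (left_mem_Ico.mpr (ht₀.trans_lt ht)) ⟨ht₀, ht⟩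
    (by rw [criticalFun_zero]; positivity)
  rcases hy.1.eq_or_lt with rfl | hy₀
  · rw [criticalFun_zero] at hroot
    exact (one_div_pos.mpr (sqrt_pos.mpr (by positivity))).ne hroot
  · exact hy.2.ne (huniq y hy₀ hroot)

theorem lt_criticalFun_of_lt (hpos : 0 < xΦ) {t : ℝ} (ht : xΦ < t) :
    1 / √(8 * π) < criticalFun t := by
  have hneg := isPreconnected_Ioi.lt_of_forall_ne (f := fun y ↦ -criticalFun y)
    continuous_criticalFun.neg.continuousOn (c := -(1 / √(8 * π)))
    (fun y hy hroot ↦ hy.ne' (huniq y (hpos.trans hy) (neg_inj.mp hroot)))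
    (a := max 4 t) (lt_max_of_lt_right ht) ht
    (neg_lt_neg (one_div_sqrt_lt_criticalFun (le_max_left 4 t)))
  exact neg_lt_neg_iff.mp hneg

theorem cantelliGap_le (hpos : 0 < xΦ) {t : ℝ} (ht : 0 ≤ t) : cantelliGap t ≤ cantelliGap xΦ := by
  have hcont : Continuous cantelliGap :=
    continuous_iff_continuousAt.mpr fun t ↦ (hasDerivAt_cantelliGap t).continuousAt
  rcases le_total t xΦ with htx | hxt
  · refine monotoneOn_of_hasDerivWithinAt_nonneg (convex_Icc 0 xΦ) hcont.continuousOn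
      (fun x _ ↦ (hasDerivAt_cantelliGap x).hasDerivWithinAt) (fun x hx ↦ ?_)
      ⟨ht, htx⟩ ⟨hpos.le, le_rfl⟩ htx
    rw [interior_Icc] at hx
    exact mul_nonneg (by positivity) (sub_nonneg.mpr (criticalFun_lt_of_lt huniq hx.1.le hx.2).le)
  · refine antitoneOn_of_hasDerivWithinAt_nonpos (convex_Ici xΦ) hcont.continuousOn
      (fun x _ ↦ (hasDerivAt_cantelliGap x).hasDerivWithinAt) (fun x hx ↦ ?_)
      self_mem_Ici hxt hxt
    rw [interior_Ici] at hx
    exact mul_nonpos_of_nonneg_of_nonpos (by positivity)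
      (sub_nonpos.mpr (lt_criticalFun_of_lt huniq hpos hx).le)

theorem half_le_cantelliGap (hpos : 0 < xΦ) : 1 / 2 ≤ cantelliGap xΦ :=
  cantelliGap_zero ▸ cantelliGap_le huniq hpos le_rfl

theorem abs_twoPointMeasure_Iic_sub_le (hpos : 0 < xΦ) (x : ℝ) :
    |(twoPointMeasure xΦ (Iic x)).toReal - stdNormalCDF x| ≤ cantelliGap xΦ := by
  have hhalf := half_le_cantelliGap huniq hpos
  have hgap := cantelliGap_eq_sub xΦ
  have hΦ0 := stdNormalCDF_zero
  rw [twoPointMeasure_Iic hpos, abs_sub_le_iff]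
  split_ifs with h₁ h₂
  · have := monotone_stdNormalCDF (show -x ≤ 0 by linarith)
    have := stdNormalCDF_add_stdNormalCDF_neg x
    constructor <;> linarith [stdNormalCDF_le_one x]
  · have hinv : cantelliGap (1 / xΦ) = xΦ ^ 2 / (1 + xΦ ^ 2) - stdNormalCDF (-1 / xΦ) := by
      rw [cantelliGap, neg_div']
      field_simp
      ring
    have := cantelliGap_le huniq hpos (t := 1 / xΦ) (by positivity)
    have := monotone_stdNormalCDF h₂
    have := monotone_stdNormalCDF (not_le.mp h₁).le
    constructor <;> linarith
  · have := monotone_stdNormalCDF ((not_le.mp h₂).le.trans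
      (div_neg_of_neg_of_pos (by norm_num) hpos).le)
    constructor <;> linarith [stdNormalCDF_nonneg x]

end UniqueRoot

theorem extremal_sup_attained_general (xΦ : ℝ) (hpos : 0 < xΦ)
    (huniq : ∀ y : ℝ, 0 < y →
      y * Real.exp (y ^ 2 / 2) / (1 + y ^ 2) ^ 2 = 1 / Real.sqrt (8 * Real.pi) → y = xΦ) :
    (⨆ x : ℝ, |((twoPointMeasure xΦ) (Set.Iic x)).toReal - stdNormalCDF x|)
      = ⨆ t : ℝ, (1 / (1 + t ^ 2) - stdNormalCDF (-|t|)) := by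
  have hgap : |xΦ ^ 2 / (1 + xΦ ^ 2) - stdNormalCDF xΦ| = cantelliGap xΦ := by
    rw [abs_sub_comm, ← cantelliGap_eq_sub, abs_of_nonneg]
    exact (half_le_cantelliGap huniq hpos).trans' (by norm_num)
  have hlub : IsLUB (range fun x ↦ |(twoPointMeasure xΦ (Iic x)).toReal - stdNormalCDF x|)
      (cantelliGap xΦ) :=
    isLUB_of_mem_closure (forall_mem_range.mpr (abs_twoPointMeasure_Iic_sub_le huniq hpos))
      (mem_closure_of_tendsto (hgap ▸ tendsto_abs_twoPointMeasure_Iic_sub hpos)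
        (.of_forall fun x ↦ mem_range_self x))
  have hmax : IsGreatest (range fun t : ℝ ↦ 1 / (1 + t ^ 2) - stdNormalCDF (-|t|))
      (cantelliGap xΦ) :=
    ⟨⟨xΦ, by dsimp only; rw [abs_of_pos hpos, cantelliGap]⟩, forall_mem_range.mpr fun t ↦ by
      simpa only [cantelliGap, sq_abs] using cantelliGap_le huniq hpos (abs_nonneg t)⟩
  rw [hlub.ciSup_eq, hmax.isLUB.ciSup_eq]

theorem extremal_sup_attained (xΦ : ℝ) (hpos : 0 < xΦ)
    (hroot : xΦ * Real.exp (xΦ ^ 2 / 2) / (1 + xΦ ^ 2) ^ 2 = 1 / Real.sqrt (8 * Real.pi))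
    (huniq : ∀ y : ℝ, 0 < y →
      y * Real.exp (y ^ 2 / 2) / (1 + y ^ 2) ^ 2 = 1 / Real.sqrt (8 * Real.pi) → y = xΦ) :
    (⨆ x : ℝ, |((twoPointMeasure xΦ) (Set.Iic x)).toReal - stdNormalCDF x|)
      = ⨆ t : ℝ, (1 / (1 + t ^ 2) - stdNormalCDF (-|t|)) :=
  extremal_sup_attained_general xΦ hpos huniq
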